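/- Fix a weighted configuration with D0 sufficiently small (depending only on d), and vertices u, v. Let B_W be a box in W(u,v) ∪ S(u,v) and let B_H be a box of some hole H. Then every walk in G^+ from B_H to B_W contains a box belonging to the visible boundary of H. -/

import Mathlib

open Filter Set
open scoped ENNReal NNReal Topology

noncomputable section

def torusDist {d : ℕ} (L : ℝ) (x y : Fin d → ℝ) : ℝ :=
  ⨆ k : Fin d, ⨅ m : ℤ, |x k - y k - m * L|

lemma torusDist_symm {d : ℕ} (L : ℝ) (x y : Fin d → ℝ) :
    torusDist L x y = torusDist L y x := by
  unfold torusDist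
  refine iSup_congr fun k => ?_
  rw [← sInf_range, ← sInf_range]
  congr 1
  ext r
  simp only [Set.mem_range]
  constructor
  · rintro ⟨m, rfl⟩
    refine ⟨-m, ?_⟩
    have h : y k - x k - ((-m : ℤ) : ℝ) * L = -(x k - y k - (m : ℤ) * L) := by
      push_cast; ring
    rw [h, abs_neg]
  · rintro ⟨m, rfl⟩
    refine ⟨-m, ?_⟩
    have h : x k - y k - ((-m : ℤ) : ℝ) * L = -(y k - x k - (m : ℤ) * L) := by
      push_cast; ring
    rw [h, abs_neg]

def girgGraph {d : ℕ} (L : ℝ) {V : Type*} (pos : V → Fin d → ℝ) (wt : V → ℝ) :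
    SimpleGraph V where
  Adj u v := u ≠ v ∧ torusDist L (pos u) (pos v) ^ d ≤ wt u * wt v
  symm := ⟨by
    intro u v h
    exact ⟨h.1.symm, by rw [torusDist_symm, mul_comm]; exact h.2⟩⟩
  loopless := ⟨fun u h => h.1 rfl⟩

/-- `wLow d i = 2^{d i / 2}`, the lower end of the weight range of a level-`i` box. -/
def wLow (d i : ℕ) : ℝ := (2 : ℝ) ^ ((d : ℝ) * i / 2)

/-- A box of the tessellation: a level `0 ≤ level ≤ k0` together with the coordinates of
its geometric cell.  Boxes of level `< k0` are the usual boxes and the unique box of level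
`k0` is the top box. -/
@[ext]
structure Box (d k0 : ℕ) where
  level : ℕ
  idx : Fin d → ℕ
  level_le : level ≤ k0
  idx_pos : ∀ k, 1 ≤ idx k
  idx_le : ∀ k, idx k ≤ 2 ^ (k0 - level)

instance (d k0 : ℕ) : Finite (Box d k0) := by
  apply Finite.of_injective (fun B : Box d k0 =>
    ((⟨B.level, Nat.lt_succ_of_le B.level_le⟩ : Fin (k0 + 1)),
      fun k => (⟨B.idx k, Nat.lt_succ_of_le ((B.idx_le k).trans
        (Nat.pow_le_pow_right (by norm_num) (Nat.sub_le k0 B.level)))⟩ : Fin (2 ^ k0 + 1))))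
  intro B1 B2 h
  simp only [Prod.mk.injEq, Fin.mk.injEq, funext_iff] at h
  exact Box.ext h.1 (funext fun k => by simpa using h.2 k)

/-- The region of the augmented space `V_w = T × [1, ∞)` occupied by a box. -/
def boxSet (d k0 : ℕ) (D0 : ℝ) (B : Box d k0) : Set ((Fin d → ℝ) × ℝ) :=
  {p | (∀ k, 2 ^ B.level * ((B.idx k : ℝ) - 1) * D0 ≤ p.1 k ∧
          p.1 k < 2 ^ B.level * (B.idx k : ℝ) * D0) ∧
       wLow d B.level ≤ p.2 ∧ (B.level < k0 → p.2 < wLow d (B.level + 1))}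

/-- Translation of an augmented point by an integer multiple of the torus period in
each geometric coordinate. -/
def torusShift {d : ℕ} (L : ℝ) (v : Fin d → ℤ) (p : (Fin d → ℝ) × ℝ) : (Fin d → ℝ) × ℝ :=
  (fun k => p.1 k + (v k : ℝ) * L, p.2)

/-- The closures of `S1` and `S2` intersect (as subsets of the torus, i.e. up to integer
translations of the geometric coordinates) in a set of Hausdorff dimension at least `δ`. -/
def meetsDim {d : ℕ} (L : ℝ) (δ : ℕ) (S1 S2 : Set ((Fin d → ℝ) × ℝ)) : Prop :=
  ∃ v w : Fin d → ℤ,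
    (δ : ℝ≥0∞) ≤ dimH (torusShift L v '' closure S1 ∩ torusShift L w '' closure S2)

/-- The closures of `S1` and `S2` intersect (as subsets of the torus). -/
def meets {d : ℕ} (L : ℝ) (S1 S2 : Set ((Fin d → ℝ) × ℝ)) : Prop :=
  ∃ v w : Fin d → ℤ,
    (torusShift L v '' closure S1 ∩ torusShift L w '' closure S2).Nonempty

/-- The graph `𝓑` on boxes: two boxes are adjacent iff their closures intersect in a
`d`-dimensional set. -/
def boxGraph (d k0 : ℕ) (D0 L : ℝ) : SimpleGraph (Box d k0) where
  Adj B1 B2 := B1 ≠ B2 ∧ meetsDim L d (boxSet d k0 D0 B1) (boxSet d k0 D0 B2)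
  symm := ⟨by
    rintro B1 B2 ⟨h1, v, w, h⟩
    exact ⟨h1.symm, w, v, by rwa [Set.inter_comm]⟩⟩
  loopless := ⟨fun B h => h.1 rfl⟩

/-- The graph `𝓖⁺` on boxes: two boxes are adjacent iff their closures intersect. -/
def gPlusGraph (d k0 : ℕ) (D0 L : ℝ) : SimpleGraph (Box d k0) where
  Adj B1 B2 := B1 ≠ B2 ∧ meets L (boxSet d k0 D0 B1) (boxSet d k0 D0 B2)
  symm := ⟨by
    rintro B1 B2 ⟨h1, v, w, h⟩
    exact ⟨h1.symm, w, v, by rwa [Set.inter_comm]⟩⟩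
  loopless := ⟨fun B h => h.1 rfl⟩

/-- The parent of a box: the box of the next level directly above it (the unique box of
minimum volume whose geometric projection strictly contains that of the given box).
The top box is its own parent. -/
def parentBox {d k0 : ℕ} (B : Box d k0) : Box d k0 :=
  if h : B.level < k0 then
    { level := B.level + 1
      idx := fun k => (B.idx k + 1) / 2
      level_le := h
      idx_pos := fun k => by
        have := B.idx_pos k
        show 1 ≤ (B.idx k + 1) / 2
        omega
      idx_le := fun k => by
        have h1 := B.idx_le k
        have h2 : k0 - B.level = (k0 - (B.level + 1)) + 1 := by omega
        rw [h2, pow_succ] at h1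
        show (B.idx k + 1) / 2 ≤ 2 ^ (k0 - (B.level + 1))
        omega }
  else B

lemma parentBox_level_le {d k0 : ℕ} (B : Box d k0) : B.level ≤ (parentBox B).level := by
  unfold parentBox
  split <;> simp

/-- The spanning tree `T_𝓑` of `𝓑`, given by the parent edges. -/
def treeGraph (d k0 : ℕ) : SimpleGraph (Box d k0) where
  Adj B1 B2 := B1 ≠ B2 ∧ (parentBox B1 = B2 ∨ parentBox B2 = B1)
  symm := ⟨by
    rintro B1 B2 ⟨h1, h2⟩
    exact ⟨h1.symm, h2.symm⟩⟩
  loopless := ⟨fun B h => h.1 rfl⟩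

/-- The subgraph of `G` induced by a set `R` (kept on the ambient vertex type). -/
def onSet {V : Type*} (G : SimpleGraph V) (R : Set V) : SimpleGraph V where
  Adj a b := a ∈ R ∧ b ∈ R ∧ G.Adj a b
  symm := ⟨fun _ _ h => ⟨h.2.1, h.1, h.2.2.symm⟩⟩
  loopless := ⟨fun a h => G.ne_of_adj h.2.2 rfl⟩

section Generic

variable {α : Type*}

/-- `m`-fold ancestor with respect to a parent function. -/
def ancF (par : α → α) (B : α) (m : ℕ) : α := par^[m] B

/-- Number of steps from `B1` to the lowest common ancestor of `B1` and `B2`. -/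
def lcaStepsF (par : α → α) (B1 B2 : α) : ℕ :=
  sInf {m | ∃ m', ancF par B2 m' = ancF par B1 m}

/-- Number of steps from `B2` to the lowest common ancestor of `B1` and `B2`. -/
def lcaStepsF' (par : α → α) (B1 B2 : α) : ℕ :=
  sInf {m | ancF par B2 m = ancF par B1 (lcaStepsF par B1 B2)}

/-- The canonical path `L(B1, B2)`: the unique path between `B1` and `B2` in the spanning
tree given by the parent edges, i.e. the two upward paths to the lowest common ancestor. -/
def canonPathF (par : α → α) (B1 B2 : α) : Set α :=
  {A | ∃ m ≤ lcaStepsF par B1 B2, ancF par B1 m = A} ∪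
    {A | ∃ m ≤ lcaStepsF' par B1 B2, ancF par B2 m = A}

/-- `L'(B1, B2)`: the canonical path together with everything `G⁺`-adjacent to it. -/
def extPathF (par : α → α) (Gp : SimpleGraph α) (B1 B2 : α) : Set α :=
  canonPathF par B1 B2 ∪ {B | ∃ B' ∈ canonPathF par B1 B2, Gp.Adj B B'}

/-- `W(B1, B2)`: `L'(B1, B2)` together with all connected components of inactive elements
(in `G⁺`) meeting `L'(B1, B2)`. -/
def WsetF (par : α → α) (Gp : SimpleGraph α) (act : α → Prop) (B1 B2 : α) : Set α :=
  extPathF par Gp B1 B2 ∪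
    {B | ¬ act B ∧ ∃ B' ∈ extPathF par Gp B1 B2, ¬ act B' ∧
      (onSet Gp {C | ¬ act C}).Reachable B' B}

/-- `S(B1, B2)`: the elements outside `W(B1, B2)` that are `G⁺`-adjacent to it
(they are automatically active). -/
def SsetF (par : α → α) (Gp : SimpleGraph α) (act : α → Prop) (B1 B2 : α) : Set α :=
  {B | B ∉ WsetF par Gp act B1 B2 ∧ ∃ B' ∈ WsetF par Gp act B1 B2, Gp.Adj B B'}

/-- The boundary of `C` visible from `x`: elements `G⁺`-adjacent to `C` that are connected
to `x` in `𝓑` with `C` removed. -/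
def visBoundaryF (Gb Gp : SimpleGraph α) (C : Set α) (x : α) : Set α :=
  {B' | (∃ B'' ∈ C, Gp.Adj B' B'') ∧ (onSet Gb Cᶜ).Reachable x B'}

end Generic

/-- A box is active if it contains the augmented point of at least one vertex. -/
def isActive (d k0 : ℕ) (D0 : ℝ) {V : Type*} (pos : V → Fin d → ℝ) (wt : V → ℝ)
    (B : Box d k0) : Prop :=
  ∃ u, (pos u, wt u) ∈ boxSet d k0 D0 B

end

/-- `W(B1, B2)` for the box tessellation, with activity determined by the configuration. -/
def boxW (d k0 : ℕ) (D0 L : ℝ) {V : Type*} (pos : V → Fin d → ℝ) (wt : V → ℝ)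
    (B1 B2 : Box d k0) : Set (Box d k0) :=
  WsetF parentBox (gPlusGraph d k0 D0 L) (isActive d k0 D0 pos wt) B1 B2

/-- `S(B1, B2)` for the box tessellation. -/
def boxS (d k0 : ℕ) (D0 L : ℝ) {V : Type*} (pos : V → Fin d → ℝ) (wt : V → ℝ)
    (B1 B2 : Box d k0) : Set (Box d k0) :=
  SsetF parentBox (gPlusGraph d k0 D0 L) (isActive d k0 D0 pos wt) B1 B2

/-- The boundary of `C` visible from `x`, for the box tessellation.  For a hole `H`
(a connected component of `𝓑` minus `W(u,v)`) containing the box `x`, the visible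
boundary of `H` is `boxVisBoundary … (W(u,v)) x`. -/
def boxVisBoundary (d k0 : ℕ) (D0 L : ℝ) (C : Set (Box d k0)) (x : Box d k0) :
    Set (Box d k0) :=
  visBoundaryF (boxGraph d k0 D0 L) (gPlusGraph d k0 D0 L) C x

/-! A `𝓖⁺`-edge `B — C` means that the closures of `B` and `C` share a point `p` of the torus.
The boxes whose closures contain `p` are `𝓖⁺`-neighbours of `B`, and they form a connected set
in `𝓑`: at one level their index vectors differ by at most one in each coordinate, so changing
one coordinate at a time passes through boxes sharing a `d`-dimensional face; two such boxes of
different levels are of consecutive levels with `p` on the top face of the lower one, which it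
shares with its parent. So along a `𝓖⁺`-walk from the hole, either some step is taken from a box
`B`, still joined to the hole in `𝓑 - W`, towards one of these neighbours lying in `W`, and then
`B` is on the visible boundary, or every step is replaced by a `𝓑`-path avoiding `W`, and then
the last box lies in `S(u,v)` and is on the visible boundary. -/

section VisibleBoundary

variable {α : Type*}

lemma onSet_mono (G : SimpleGraph α) {R R' : Set α} (h : R ⊆ R') : onSet G R ≤ onSet G R' :=
  fun _ _ hab => ⟨h hab.1, h hab.2.1, hab.2.2⟩

theorem exists_mem_support_visBoundaryF {Gb Gp : SimpleGraph α}
    (hlocal : ∀ a b, Gp.Adj a b →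
      ∃ S : Set α, (∀ c ∈ S, c = a ∨ Gp.Adj a c) ∧ (onSet Gb S).Reachable a b)
    {W : Set α} {x a b : α} (p : Gp.Walk a b) (hxa : (onSet Gb Wᶜ).Reachable x a)
    (ha : a ∉ W) (hb : b ∈ W ∨ ∃ c ∈ W, Gp.Adj b c) :
    ∃ c ∈ p.support, c ∈ visBoundaryF Gb Gp W x := by
  induction p with
  | nil =>
    obtain hb | hb := hb
    · exact absurd hb ha
    · exact ⟨_, List.mem_singleton_self _, hb, hxa⟩
  | @cons a b _ hab p ih =>
    have boundary (h : ∃ c ∈ W, Gp.Adj a c) :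
        ∃ c ∈ (SimpleGraph.Walk.cons hab p).support, c ∈ visBoundaryF Gb Gp W x :=
      ⟨a, SimpleGraph.Walk.start_mem_support _, h, hxa⟩
    by_cases hbW : b ∈ W
    · exact boundary ⟨b, hbW, hab⟩
    obtain ⟨S, hSa, hS⟩ := hlocal a b hab
    by_cases hSW : ∃ c ∈ S, c ∈ W
    · obtain ⟨c, hcS, hcW⟩ := hSW
      exact boundary ⟨c, hcW, (hSa c hcS).resolve_left fun hca => ha (hca ▸ hcW)⟩
    push Not at hSW
    obtain ⟨c, hc, hcx⟩ := ih (hxa.trans (hS.mono (onSet_mono Gb hSW))) hbW hb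
    exact ⟨c, List.mem_cons_of_mem _ hc, hcx⟩

end VisibleBoundary

lemma wLow_strictMono {d : ℕ} (hd : 0 < d) : StrictMono (wLow d) := fun i j hij => by
  unfold wLow
  rw [Real.rpow_lt_rpow_left_iff one_lt_two]
  have : (0 : ℝ) < d := by exact_mod_cast hd
  gcongr

lemma closure_setOf_le_and_imp_lt {a b : ℝ} (hab : a < b) (P : Prop) :
    closure {w : ℝ | a ≤ w ∧ (P → w < b)} = {w | a ≤ w ∧ (P → w ≤ b)} := by
  by_cases hP : P
  · simp only [hP, forall_const]
    exact closure_Ico hab.ne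
  · simp only [hP, IsEmpty.forall_iff, and_true]
    exact closure_Ici a

section Cubes

variable {d k0 : ℕ} {D0 L : ℝ}

/-- The closed cube of level `i` with index vector `J`, in the universal cover of the torus. -/
def clCube (d k0 : ℕ) (D0 : ℝ) (i : ℕ) (J : Fin d → ℤ) : Set ((Fin d → ℝ) × ℝ) :=
  {p | (∀ k, 2 ^ i * ((J k : ℝ) - 1) * D0 ≤ p.1 k ∧ p.1 k ≤ 2 ^ i * (J k : ℝ) * D0) ∧
       wLow d i ≤ p.2 ∧ (i < k0 → p.2 ≤ wLow d (i + 1))}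

lemma closure_boxSet (hd : 0 < d) (hD0 : 0 < D0) (B : Box d k0) :
    closure (boxSet d k0 D0 B) = clCube d k0 D0 B.level (fun k => B.idx k) := by
  have hprod : boxSet d k0 D0 B =
      (univ.pi fun k => Ico (2 ^ B.level * ((B.idx k : ℝ) - 1) * D0)
        (2 ^ B.level * (B.idx k : ℝ) * D0)) ×ˢ
      {w | wLow d B.level ≤ w ∧ (B.level < k0 → w < wLow d (B.level + 1))} := by
    ext p
    simp [boxSet]
  have hlen (k : Fin d) :
      2 ^ B.level * ((B.idx k : ℝ) - 1) * D0 < 2 ^ B.level * (B.idx k : ℝ) * D0 := by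
    have : (0 : ℝ) < 2 ^ B.level * D0 := by positivity
    nlinarith
  rw [hprod, closure_prod_eq, closure_pi_set,
    closure_setOf_le_and_imp_lt (wLow_strictMono hd B.level.lt_succ_self)]
  ext p
  simp only [clCube, mem_prod, mem_univ_pi, closure_Ico (hlen _).ne, mem_Icc, mem_ofPred_eq,
    Int.cast_natCast]

lemma image_torusShift_clCube (hL : L = D0 * 2 ^ k0) {i : ℕ} (hi : i ≤ k0) (J v : Fin d → ℤ) :
    torusShift L v '' clCube d k0 D0 i J =
      clCube d k0 D0 i (fun k => J k + v k * 2 ^ (k0 - i)) := by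
  have hinv : Function.LeftInverse (torusShift L (-v)) (torusShift L v) := fun p => by
    simp [torusShift]
  have hinv' : Function.RightInverse (torusShift L (-v)) (torusShift L v) := fun p => by
    simp [torusShift]
  have hL' : L = 2 ^ i * 2 ^ (k0 - i) * D0 := by
    rw [hL, ← pow_add, Nat.add_sub_cancel' hi, mul_comm]
  rw [image_eq_preimage_of_inverse hinv hinv']
  ext p
  simp only [clCube, mem_preimage, mem_ofPred_eq, torusShift, Pi.neg_apply, Int.cast_neg,
    Int.cast_add, Int.cast_mul, Int.cast_pow, Int.cast_ofNat]
  refine and_congr (forall_congr' fun k => ?_) Iff.rfl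
  rw [hL']
  constructor <;> rintro ⟨h1, h2⟩ <;> constructor <;> linarith

end Cubes

section Boxes

variable {d k0 : ℕ} {D0 L : ℝ}

/-- The box of level `i` whose closure is a torus translate of `clCube d k0 D0 i J`: the indices
are reduced modulo the period `2 ^ (k0 - i)`. -/
def mkBox (d k0 : ℕ) (i : ℕ) (hi : i ≤ k0) (J : Fin d → ℤ) : Box d k0 where
  level := i
  idx := fun k => ((J k - 1) % (2 ^ (k0 - i) : ℤ)).toNat + 1
  level_le := hi
  idx_pos := fun _ => Nat.le_add_left 1 _
  idx_le := fun k => by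
    have h0 : (0 : ℤ) < 2 ^ (k0 - i) := by positivity
    have h1 := Int.emod_lt_of_pos (J k - 1) h0
    have h2 : ((2 ^ (k0 - i) : ℕ) : ℤ) = 2 ^ (k0 - i) := by push_cast; ring
    omega

@[simp]
lemma mkBox_level (i : ℕ) (hi : i ≤ k0) (J : Fin d → ℤ) : (mkBox d k0 i hi J).level = i := rfl

lemma mkBox_idx_add_mul (B : Box d k0) (v : Fin d → ℤ) :
    mkBox d k0 B.level B.level_le (fun k => B.idx k + v k * 2 ^ (k0 - B.level)) = B := by
  refine Box.ext rfl (funext fun k => ?_)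
  show (((B.idx k : ℤ) + v k * 2 ^ (k0 - B.level) - 1) % 2 ^ (k0 - B.level)).toNat + 1 = B.idx k
  have h1 := B.idx_pos k
  have h2 := B.idx_le k
  have h3 : ((2 ^ (k0 - B.level) : ℕ) : ℤ) = 2 ^ (k0 - B.level) := by push_cast; ring
  rw [show (B.idx k : ℤ) + v k * 2 ^ (k0 - B.level) - 1 = B.idx k - 1 + v k * 2 ^ (k0 - B.level)
    by ring, Int.add_mul_emod_self_right, Int.emod_eq_of_lt (by omega) (by omega)]
  omega

lemma exists_image_closure_mkBox (hd : 0 < d) (hD0 : 0 < D0) (hL : L = D0 * 2 ^ k0)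
    (i : ℕ) (hi : i ≤ k0) (J : Fin d → ℤ) :
    ∃ v, torusShift L v '' closure (boxSet d k0 D0 (mkBox d k0 i hi J)) = clCube d k0 D0 i J := by
  refine ⟨fun k => (J k - 1) / 2 ^ (k0 - i), ?_⟩
  rw [closure_boxSet hd hD0, mkBox_level, image_torusShift_clCube hL hi]
  congr 1
  funext k
  show ((((J k - 1) % 2 ^ (k0 - i)).toNat + 1 : ℕ) : ℤ) + (J k - 1) / 2 ^ (k0 - i) * 2 ^ (k0 - i)
    = J k
  rw [Nat.cast_add, Nat.cast_one, Int.toNat_of_nonneg (Int.emod_nonneg _ (by positivity))]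
  linarith [Int.emod_add_mul_ediv (J k - 1) (2 ^ (k0 - i))]

def boxesThrough (d k0 : ℕ) (D0 L : ℝ) (p : (Fin d → ℝ) × ℝ) : Set (Box d k0) :=
  {B | ∃ v, p ∈ torusShift L v '' closure (boxSet d k0 D0 B)}

lemma mkBox_mem_boxesThrough (hd : 0 < d) (hD0 : 0 < D0) (hL : L = D0 * 2 ^ k0)
    {i : ℕ} (hi : i ≤ k0) {J : Fin d → ℤ} {p : (Fin d → ℝ) × ℝ} (h : p ∈ clCube d k0 D0 i J) :
    mkBox d k0 i hi J ∈ boxesThrough d k0 D0 L p :=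
  let ⟨v, hv⟩ := exists_image_closure_mkBox hd hD0 hL i hi J
  ⟨v, hv ▸ h⟩

lemma exists_eq_mkBox_of_mem_boxesThrough (hd : 0 < d) (hD0 : 0 < D0) (hL : L = D0 * 2 ^ k0)
    {p : (Fin d → ℝ) × ℝ} {B : Box d k0} (h : B ∈ boxesThrough d k0 D0 L p) :
    ∃ i hi J, p ∈ clCube d k0 D0 i J ∧ B = mkBox d k0 i hi J := by
  obtain ⟨v, hv⟩ := h
  rw [closure_boxSet hd hD0, image_torusShift_clCube hL B.level_le] at hv
  exact ⟨_, B.level_le, _, hv, (mkBox_idx_add_mul B v).symm⟩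

lemma eq_or_gPlusGraph_adj_of_mem_boxesThrough {p : (Fin d → ℝ) × ℝ} {B B' : Box d k0}
    (h : B ∈ boxesThrough d k0 D0 L p) (h' : B' ∈ boxesThrough d k0 D0 L p) :
    B' = B ∨ (gPlusGraph d k0 D0 L).Adj B B' := by
  obtain ⟨v, hv⟩ := h
  obtain ⟨v', hv'⟩ := h'
  by_cases heq : B' = B
  · exact Or.inl heq
  · exact Or.inr ⟨Ne.symm heq, v, v', p, hv, hv'⟩

lemma boxGraph_adj_mkBox (hd : 0 < d) (hD0 : 0 < D0) (hL : L = D0 * 2 ^ k0)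
    {i i' : ℕ} (hi : i ≤ k0) (hi' : i' ≤ k0) {J J' : Fin d → ℤ}
    (hne : mkBox d k0 i hi J ≠ mkBox d k0 i' hi' J')
    (hdim : (d : ℝ≥0∞) ≤ dimH (clCube d k0 D0 i J ∩ clCube d k0 D0 i' J')) :
    (boxGraph d k0 D0 L).Adj (mkBox d k0 i hi J) (mkBox d k0 i' hi' J') := by
  obtain ⟨v, hv⟩ := exists_image_closure_mkBox hd hD0 hL i hi J
  obtain ⟨v', hv'⟩ := exists_image_closure_mkBox hd hD0 hL i' hi' J'
  exact ⟨hne, v, v', by rwa [hv, hv']⟩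

end Boxes

section Dimension

variable {d k0 : ℕ} {D0 : ℝ}

lemma natCast_le_dimH_of_pi_Icc_subset_image {X : Type*} [EMetricSpace X] {K : ℝ≥0}
    {g : X → Fin d → ℝ} (hg : LipschitzWith K g) {a b : Fin d → ℝ} (hab : ∀ k, a k < b k)
    {S : Set X} (hS : univ.pi (fun k => Icc (a k) (b k)) ⊆ g '' S) : (d : ℝ≥0∞) ≤ dimH S := by
  have hint : (interior (univ.pi fun k => Icc (a k) (b k))).Nonempty := by
    rw [interior_pi_set finite_univ]
    simp only [interior_Icc]
    exact univ_pi_nonempty_iff.2 fun k => nonempty_Ioo.2 (hab k)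
  calc (d : ℝ≥0∞) = dimH (univ.pi fun k => Icc (a k) (b k)) := by
        rw [Real.dimH_of_nonempty_interior hint, Module.finrank_fin_fun]
    _ ≤ dimH (g '' S) := dimH_mono hS
    _ ≤ dimH S := hg.dimH_image_le S

lemma lipschitzWith_update_fst_snd (k : Fin d) :
    LipschitzWith 1 fun q : (Fin d → ℝ) × ℝ => Function.update q.1 k q.2 := by
  refine LipschitzWith.of_dist_le_mul fun q q' => ?_
  rw [NNReal.coe_one, one_mul, dist_pi_le_iff dist_nonneg]
  intro j
  rcases eq_or_ne j k with rfl | hj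
  · simpa using LipschitzWith.prod_snd.dist_le_mul q q'
  · simpa [hj] using (dist_le_pi_dist q.1 q'.1 j).trans
      (by simpa using LipschitzWith.prod_fst.dist_le_mul q q')

lemma cube_side_lt (hD0 : 0 < D0) (i : ℕ) (j : ℤ) :
    2 ^ i * ((j : ℝ) - 1) * D0 < 2 ^ i * (j : ℝ) * D0 := by
  have : (0 : ℝ) < 2 ^ i * D0 := by positivity
  nlinarith

lemma natCast_le_dimH_clCube_inter_update (hd : 0 < d) (hD0 : 0 < D0) (i : ℕ)
    (J : Fin d → ℤ) (k : Fin d) :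
    (d : ℝ≥0∞) ≤
      dimH (clCube d k0 D0 i J ∩ clCube d k0 D0 i (Function.update J k (J k + 1))) := by
  refine natCast_le_dimH_of_pi_Icc_subset_image (lipschitzWith_update_fst_snd k)
    (a := Function.update (fun j => 2 ^ i * ((J j : ℝ) - 1) * D0) k (wLow d i))
    (b := Function.update (fun j => 2 ^ i * (J j : ℝ) * D0) k (wLow d (i + 1)))
    (fun j => ?_) fun y hy => ?_
  · rcases eq_or_ne j k with rfl | hj
    · simpa using wLow_strictMono hd i.lt_succ_self
    · simpa [hj] using cube_side_lt hD0 i (J j)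
  · have hy' (j : Fin d) := hy j (mem_univ j)
    have hyk := hy' k
    simp only [Function.update_self, mem_Icc] at hyk
    have hface : (0 : ℝ) ≤ 2 ^ i * D0 := by positivity
    refine ⟨(Function.update y k (2 ^ i * (J k : ℝ) * D0), y k),
      ⟨⟨fun j => ?_, hyk.1, fun _ => hyk.2⟩, ⟨fun j => ?_, hyk.1, fun _ => hyk.2⟩⟩, by simp⟩
    · rcases eq_or_ne j k with rfl | hj
      · simp only [Function.update_self]
        constructor <;> nlinarith
      · simpa [hj] using hy' j
    · rcases eq_or_ne j k with rfl | hj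
      · simp only [Function.update_self, Int.cast_add, Int.cast_one, add_sub_cancel_right]
        constructor <;> nlinarith
      · simpa [hj] using hy' j

lemma Icc_cube_side_subset_parent (hD0 : 0 < D0) (i : ℕ) (j : ℤ) :
    Icc (2 ^ i * ((j : ℝ) - 1) * D0) (2 ^ i * (j : ℝ) * D0) ⊆
      Icc (2 ^ (i + 1) * ((((j + 1) / 2 : ℤ) : ℝ) - 1) * D0)
        (2 ^ (i + 1) * (((j + 1) / 2 : ℤ) : ℝ) * D0) := by
  have hlo : 2 * ((((j + 1) / 2 : ℤ) : ℝ) - 1) ≤ j - 1 := by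
    exact_mod_cast (by omega : 2 * ((j + 1) / 2 - 1) ≤ j - 1)
  have hhi : (j : ℝ) ≤ 2 * (((j + 1) / 2 : ℤ) : ℝ) := by
    exact_mod_cast (by omega : j ≤ 2 * ((j + 1) / 2))
  have : (0 : ℝ) < 2 ^ i * D0 := by positivity
  apply Icc_subset_Icc <;> rw [pow_succ] <;> nlinarith

lemma mem_clCube_parent (hd : 0 < d) (hD0 : 0 < D0) {i : ℕ} {J : Fin d → ℤ}
    {p : (Fin d → ℝ) × ℝ} (hp : p ∈ clCube d k0 D0 i J) (hw : p.2 = wLow d (i + 1)) :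
    p ∈ clCube d k0 D0 (i + 1) (fun k => (J k + 1) / 2) :=
  ⟨fun k => Icc_cube_side_subset_parent hD0 i (J k) (hp.1 k), hw.ge,
    fun _ => hw ▸ (wLow_strictMono hd (i + 1).lt_succ_self).le⟩

lemma natCast_le_dimH_clCube_inter_parent (hd : 0 < d) (hD0 : 0 < D0) (i : ℕ) (J : Fin d → ℤ) :
    (d : ℝ≥0∞) ≤ dimH (clCube d k0 D0 i J ∩ clCube d k0 D0 (i + 1) (fun k => (J k + 1) / 2)) := by
  refine natCast_le_dimH_of_pi_Icc_subset_image LipschitzWith.prod_fst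
    (fun k => cube_side_lt hD0 i (J k)) fun y hy => ⟨(y, wLow d (i + 1)), ?_, rfl⟩
  have hp : ((y, wLow d (i + 1)) : (Fin d → ℝ) × ℝ) ∈ clCube d k0 D0 i J :=
    ⟨fun k => hy k (mem_univ k), (wLow_strictMono hd i.lt_succ_self).le, fun _ => le_rfl⟩
  exact ⟨hp, mem_clCube_parent hd hD0 hp rfl⟩

end Dimension

section Connectivity

variable {d k0 : ℕ} {D0 L : ℝ}

lemma sub_one_le_of_mem_clCube (hD0 : 0 < D0) {i : ℕ} {J J' : Fin d → ℤ}
    {p : (Fin d → ℝ) × ℝ} (h : p ∈ clCube d k0 D0 i J) (h' : p ∈ clCube d k0 D0 i J')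
    (k : Fin d) : J k - 1 ≤ J' k := by
  have hlo := (h.1 k).1
  have hhi := (h'.1 k).2
  have : (0 : ℝ) < 2 ^ i * D0 := by positivity
  have : (J k : ℝ) - 1 ≤ J' k := by nlinarith
  exact_mod_cast this

lemma reachable_mkBox_update (hd : 0 < d) (hD0 : 0 < D0) (hL : L = D0 * 2 ^ k0)
    {i : ℕ} (hi : i ≤ k0) {p : (Fin d → ℝ) × ℝ} {J : Fin d → ℤ} {k : Fin d} {m : ℤ}
    (h : p ∈ clCube d k0 D0 i J) (h' : p ∈ clCube d k0 D0 i (Function.update J k m)) :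
    (onSet (boxGraph d k0 D0 L) (boxesThrough d k0 D0 L p)).Reachable
      (mkBox d k0 i hi J) (mkBox d k0 i hi (Function.update J k m)) := by
  have step (J' : Fin d → ℤ) (h₁ : p ∈ clCube d k0 D0 i J')
      (h₂ : p ∈ clCube d k0 D0 i (Function.update J' k (J' k + 1))) :
      (onSet (boxGraph d k0 D0 L) (boxesThrough d k0 D0 L p)).Reachable
        (mkBox d k0 i hi J') (mkBox d k0 i hi (Function.update J' k (J' k + 1))) := by
    by_cases heq : mkBox d k0 i hi J' = mkBox d k0 i hi (Function.update J' k (J' k + 1))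
    · rw [heq]
    · exact SimpleGraph.Adj.reachable ⟨mkBox_mem_boxesThrough hd hD0 hL hi h₁,
        mkBox_mem_boxesThrough hd hD0 hL hi h₂, boxGraph_adj_mkBox hd hD0 hL hi hi heq
          (natCast_le_dimH_clCube_inter_update hd hD0 i J' k)⟩
  have h₁ := sub_one_le_of_mem_clCube hD0 h h' k
  have h₂ := sub_one_le_of_mem_clCube hD0 h' h k
  simp only [Function.update_self] at h₁ h₂
  rcases (by omega : m = J k ∨ m = J k + 1 ∨ m + 1 = J k) with rfl | rfl | hm
  · rw [Function.update_eq_self]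
  · exact step J h h'
  · have hJ : Function.update (Function.update J k m) k (Function.update J k m k + 1) = J := by
      simp [hm]
    have := step _ h' (by rw [hJ]; exact h)
    rw [hJ] at this
    exact this.symm

lemma reachable_mkBox_of_mem_clCube (hd : 0 < d) (hD0 : 0 < D0) (hL : L = D0 * 2 ^ k0)
    {i : ℕ} (hi : i ≤ k0) {p : (Fin d → ℝ) × ℝ} {J J' : Fin d → ℤ}
    (h : p ∈ clCube d k0 D0 i J) (h' : p ∈ clCube d k0 D0 i J') :
    (onSet (boxGraph d k0 D0 L) (boxesThrough d k0 D0 L p)).Reachable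
      (mkBox d k0 i hi J) (mkBox d k0 i hi J') := by
  classical
  have hmem (s : Finset (Fin d)) : p ∈ clCube d k0 D0 i (s.piecewise J' J) :=
    ⟨fun k => s.piecewise_cases J' J
      (fun j : ℤ => 2 ^ i * ((j : ℝ) - 1) * D0 ≤ p.1 k ∧ p.1 k ≤ 2 ^ i * (j : ℝ) * D0)
      (h'.1 k) (h.1 k), h.2⟩
  have key (s : Finset (Fin d)) :
      (onSet (boxGraph d k0 D0 L) (boxesThrough d k0 D0 L p)).Reachable
        (mkBox d k0 i hi J) (mkBox d k0 i hi (s.piecewise J' J)) := by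
    induction s using Finset.induction_on with
    | empty => rw [Finset.piecewise_empty]
    | insert k s _ ih =>
      have hs := hmem (insert k s)
      rw [Finset.piecewise_insert] at hs ⊢
      exact ih.trans (reachable_mkBox_update hd hD0 hL hi (hmem s) hs)
  simpa using key Finset.univ

lemma level_eq_succ_of_mem_clCube (hd : 0 < d) {i j : ℕ} (hj : j ≤ k0) (hij : i < j)
    {J J' : Fin d → ℤ} {p : (Fin d → ℝ) × ℝ} (h : p ∈ clCube d k0 D0 i J)
    (h' : p ∈ clCube d k0 D0 j J') : j = i + 1 ∧ p.2 = wLow d (i + 1) := by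
  have hup := h.2.2 (hij.trans_le hj)
  have hj' : j ≤ i + 1 := (wLow_strictMono hd).le_iff_le.1 (h'.2.1.trans hup)
  obtain rfl : j = i + 1 := by omega
  exact ⟨rfl, hup.antisymm h'.2.1⟩

theorem reachable_of_mem_boxesThrough (hd : 0 < d) (hD0 : 0 < D0) (hL : L = D0 * 2 ^ k0)
    {p : (Fin d → ℝ) × ℝ} {B B' : Box d k0} (h : B ∈ boxesThrough d k0 D0 L p)
    (h' : B' ∈ boxesThrough d k0 D0 L p) :
    (onSet (boxGraph d k0 D0 L) (boxesThrough d k0 D0 L p)).Reachable B B' := by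
  wlog hle : B.level ≤ B'.level generalizing B B'
  · exact (this h' h (le_of_not_ge hle)).symm
  obtain ⟨i, hi, J, hJ, rfl⟩ := exists_eq_mkBox_of_mem_boxesThrough hd hD0 hL h
  obtain ⟨i', hi', J', hJ', rfl⟩ := exists_eq_mkBox_of_mem_boxesThrough hd hD0 hL h'
  rcases (show i ≤ i' from hle).eq_or_lt with rfl | hlt
  · exact reachable_mkBox_of_mem_clCube hd hD0 hL hi hJ hJ'
  obtain ⟨rfl, hw⟩ := level_eq_succ_of_mem_clCube hd hi' hlt hJ hJ'
  have hpar := mem_clCube_parent hd hD0 hJ hw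
  have hne : mkBox d k0 i hi J ≠ mkBox d k0 (i + 1) hi' fun k => (J k + 1) / 2 :=
    fun he => by simpa using congrArg Box.level he
  have hadj : (onSet (boxGraph d k0 D0 L) (boxesThrough d k0 D0 L p)).Adj
      (mkBox d k0 i hi J) (mkBox d k0 (i + 1) hi' fun k => (J k + 1) / 2) :=
    ⟨h, mkBox_mem_boxesThrough hd hD0 hL hi' hpar,
      boxGraph_adj_mkBox hd hD0 hL hi hi' hne (natCast_le_dimH_clCube_inter_parent hd hD0 i J)⟩
  exact hadj.reachable.trans (reachable_mkBox_of_mem_clCube hd hD0 hL hi' hpar hJ')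

theorem exists_boxGraph_path_of_gPlusGraph_adj (hd : 0 < d) (hD0 : 0 < D0)
    (hL : L = D0 * 2 ^ k0) {B B' : Box d k0} (h : (gPlusGraph d k0 D0 L).Adj B B') :
    ∃ S : Set (Box d k0), (∀ C ∈ S, C = B ∨ (gPlusGraph d k0 D0 L).Adj B C) ∧
      (onSet (boxGraph d k0 D0 L) S).Reachable B B' := by
  obtain ⟨-, v, v', p, hv, hv'⟩ := h
  exact ⟨boxesThrough d k0 D0 L p,
    fun _ hC => eq_or_gPlusGraph_adj_of_mem_boxesThrough ⟨v, hv⟩ hC,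
    reachable_of_mem_boxesThrough hd hD0 hL ⟨v, hv⟩ ⟨v', hv'⟩⟩

end Connectivity

/-- For `D0` sufficiently small (depending only on `d`), for every weighted
configuration and vertices `u, v` (contained in boxes `Bu, Bv`): if `BW` is a box in
`W(u,v) ∪ S(u,v)` and `BH` is a box of some hole `H` (that is, `BH ∉ W(u,v)`), then every
walk in `𝓖⁺` from `BH` to `BW` contains a box of the visible boundary of `H`. -/
theorem statement_8 (d : ℕ) (hd : 1 ≤ d) :
    ∃ D0star : ℝ, 0 < D0star ∧
      ∀ (n k0 : ℕ) (D0 : ℝ), 0 < D0 → D0 ≤ D0star →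
        (n : ℝ) ^ ((1 : ℝ) / d) = D0 * 2 ^ k0 →
        ∀ (V : Type) (_ : Fintype V) (pos : V → Fin d → ℝ) (wt : V → ℝ),
          (∀ u, 1 ≤ wt u) →
          (∀ u k, 0 ≤ pos u k ∧ pos u k < (n : ℝ) ^ ((1 : ℝ) / d)) →
          ∀ (u v : V) (Bu Bv : Box d k0),
            (pos u, wt u) ∈ boxSet d k0 D0 Bu →
            (pos v, wt v) ∈ boxSet d k0 D0 Bv →
            ∀ BW BH : Box d k0,
              BW ∈ boxW d k0 D0 ((n : ℝ) ^ ((1 : ℝ) / d)) pos wt Bu Bv ∪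
                    boxS d k0 D0 ((n : ℝ) ^ ((1 : ℝ) / d)) pos wt Bu Bv →
              BH ∉ boxW d k0 D0 ((n : ℝ) ^ ((1 : ℝ) / d)) pos wt Bu Bv →
              ∀ w : (gPlusGraph d k0 D0 ((n : ℝ) ^ ((1 : ℝ) / d))).Walk BH BW,
                ∃ b ∈ w.support,
                  b ∈ boxVisBoundary d k0 D0 ((n : ℝ) ^ ((1 : ℝ) / d))
                        (boxW d k0 D0 ((n : ℝ) ^ ((1 : ℝ) / d)) pos wt Bu Bv) BH := by
  refine ⟨1, one_pos, ?_⟩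
  intro n k0 D0 hD0 _ hL V _ pos wt _ _ u v Bu Bv _ _ BW BH hBW hBH w
  exact exists_mem_support_visBoundaryF
    (fun _ _ => exists_boxGraph_path_of_gPlusGraph_adj hd hD0 hL) w .rfl hBH
    (hBW.imp id And.right)
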